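/- Let T be a bounded self-adjoint operator on a complex Hilbert space H. For nonzero f ∈ H define S(f) := v_{f/‖f‖}(T), the variance of the normalized vector. Then the Gateaux variation of S at f with respect to the realified inner product exists and equals (2/‖f‖²)·((T - e_{f/‖f‖}(T))² f - v_{f/‖f‖}(T) f). -/

import Mathlib

/-!
After realification, `T` becomes a symmetric real operator `A` and the variance of `f / ‖f‖` is
`R_{A²}(f) - R_A(f)^2`, a combination of Rayleigh quotients `R_B(x) = ⟪B x, x⟫ / ‖x‖^2`.
For symmetric `B` the gradient of `R_B` at `x ≠ 0` is `(2 / ‖x‖^2) (B x - R_B(x) x)`, and the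
chain rule assembles the claimed gradient from these two.
-/

open Asymptotics Filter Topology

section Real

variable {F : Type*} [NormedAddCommGroup F] [InnerProductSpace ℝ F]

/-- For symmetric `A` and `x ≠ 0` this is the variance `‖(A - e) u‖ ^ 2` of `A` in the state
`u = ‖x‖⁻¹ • x`, where `e = ⟪A u, u⟫`. -/
noncomputable def ContinuousLinearMap.normalizedVariance (A : F →L[ℝ] F) (x : F) : ℝ :=
  (A * A).rayleighQuotient x - A.rayleighQuotient x ^ 2

theorem ContinuousLinearMap.reApplyInnerSelf_inv_norm_smul (A : F →L[ℝ] F) (x : F) :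
    A.reApplyInnerSelf (‖x‖⁻¹ • x) = A.rayleighQuotient x := by
  rw [A.reApplyInnerSelf_smul, norm_inv, norm_norm, inv_pow, inv_mul_eq_div]

variable {A : F →L[ℝ] F}

theorem LinearMap.IsSymmetric.mul_self (hA : (A : F →ₗ[ℝ] F).IsSymmetric) :
    ((A * A : F →L[ℝ] F) : F →ₗ[ℝ] F).IsSymmetric := by
  rw [ContinuousLinearMap.toLinearMap_mul]
  exact hA.mul_of_commute hA rfl

theorem LinearMap.IsSymmetric.hasFDerivAt_rayleighQuotient
    (hA : (A : F →ₗ[ℝ] F).IsSymmetric) {x : F} (hx : x ≠ 0) :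
    HasFDerivAt A.rayleighQuotient
      (innerSL ℝ ((2 / ‖x‖ ^ 2) • (A x - A.rayleighQuotient x • x))) x := by
  have hx2 : ‖x‖ ^ 2 ≠ 0 := by positivity
  have hnum := (hA.hasStrictFDerivAt_reApplyInnerSelf x).hasFDerivAt
  have hden := (hasDerivAt_inv hx2).comp_hasFDerivAt x (hasStrictFDerivAt_norm_sq x).hasFDerivAt
  refine (hnum.mul hden).congr_fderiv ?_
  ext y
  simp only [ContinuousLinearMap.rayleighQuotient, ContinuousLinearMap.reApplyInnerSelf_apply,
    RCLike.re_to_real, Function.comp_apply, _root_.add_apply,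
    _root_.smul_apply, coe_innerSL_apply, real_inner_smul_left, inner_sub_left, smul_eq_mul]
  field_simp
  ring

theorem LinearMap.IsSymmetric.hasFDerivAt_normalizedVariance
    (hA : (A : F →ₗ[ℝ] F).IsSymmetric) {x : F} (hx : x ≠ 0) :
    HasFDerivAt A.normalizedVariance
      (innerSL ℝ ((2 / ‖x‖ ^ 2) • (A (A x) - (2 * A.rayleighQuotient x) • A x
        + A.rayleighQuotient x ^ 2 • x - A.normalizedVariance x • x))) x := by
  refine ((hA.mul_self.hasFDerivAt_rayleighQuotient hx).sub
    ((hA.hasFDerivAt_rayleighQuotient hx).pow 2)).congr_fderiv ?_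
  ext y
  simp only [ContinuousLinearMap.normalizedVariance, _root_.sub_apply, _root_.smul_apply,
    coe_innerSL_apply, mul_apply_eq_comp, real_inner_smul_left, inner_sub_left, inner_add_left, smul_eq_mul]
  ring

theorem LinearMap.IsSymmetric.norm_apply_sub_reApplyInnerSelf_smul_sq
    (hA : (A : F →ₗ[ℝ] F).IsSymmetric) {u : F} (hu : ‖u‖ = 1) :
    ‖A u - A.reApplyInnerSelf u • u‖ ^ 2 =
      (A * A).reApplyInnerSelf u - A.reApplyInnerSelf u ^ 2 := by
  have hAu : ‖A u‖ ^ 2 = (A * A).reApplyInnerSelf u := by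
    rw [ContinuousLinearMap.reApplyInnerSelf_apply, mul_apply_eq_comp,
      ← ContinuousLinearMap.coe_coe A, hA, real_inner_self_eq_norm_sq]
    rfl
  rw [norm_sub_sq_real, norm_smul, real_inner_smul_right, hu, hAu]
  simp only [ContinuousLinearMap.reApplyInnerSelf_apply, RCLike.re_to_real, Real.norm_eq_abs,
    mul_one, sq_abs]
  ring

theorem LinearMap.IsSymmetric.norm_apply_sub_rayleighQuotient_smul_sq
    (hA : (A : F →ₗ[ℝ] F).IsSymmetric) (x : F) :
    ‖A (‖x‖⁻¹ • x) - A.rayleighQuotient x • (‖x‖⁻¹ • x)‖ ^ 2 =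
      A.normalizedVariance x := by
  rcases eq_or_ne x 0 with rfl | hx
  · simp [ContinuousLinearMap.normalizedVariance]
  rw [ContinuousLinearMap.normalizedVariance, ← A.reApplyInnerSelf_inv_norm_smul,
    ← (A * A).reApplyInnerSelf_inv_norm_smul, hA.norm_apply_sub_reApplyInnerSelf_smul_sq]
  rw [norm_smul, norm_inv, norm_norm, inv_mul_cancel₀ (norm_ne_zero_iff.mpr hx)]

end Real

/-- The variation (with respect to the realified inner product) of the normalized
variance `S(f) = v_{f/‖f‖}(T)` at a nonzero `f` is
`(2/‖f‖²)·((T - e)² f - v f)` where `e = e_{f/‖f‖}(T)` and `v = v_{f/‖f‖}(T)`. -/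
theorem stmt_5 {H : Type*} [NormedAddCommGroup H] [InnerProductSpace ℂ H] [CompleteSpace H]
    (T : H →L[ℂ] H) (hT : IsSelfAdjoint T) (f : H) (hf : f ≠ 0)
    (e : H → ℝ) (he : ∀ x : H, e x = (inner ℂ (T (‖x‖⁻¹ • x)) (‖x‖⁻¹ • x) : ℂ).re)
    (v : H → ℝ)
    (hv : ∀ x : H, v x = ‖T (‖x‖⁻¹ • x) - e x • (‖x‖⁻¹ • x)‖ ^ 2) :
    (fun h : H => v (f + h) - v f
        - (inner ℂ (((2 : ℝ) / ‖f‖ ^ 2) •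
            (T (T f) - (2 * e f) • T f + ((e f) ^ 2) • f - v f • f)) h : ℂ).re)
      =o[𝓝 (0 : H)] fun h : H => ‖h‖ := by
  let _ : InnerProductSpace ℝ H := InnerProductSpace.rclikeToReal ℂ H
  set A : H →L[ℝ] H := T.restrictScalars ℝ
  have hA : (A : H →ₗ[ℝ] H).IsSymmetric := hT.isSymmetric.restrictScalars
  have he' : e = A.rayleighQuotient :=
    funext fun x => (he x).trans (A.reApplyInnerSelf_inv_norm_smul x)
  have hv' : v = A.normalizedVariance := funext fun x => by
    rw [hv, he']
    exact hA.norm_apply_sub_rayleighQuotient_smul_sq x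
  subst he' hv'
  exact (hasFDerivAt_iff_isLittleO_nhds_zero.mp (hA.hasFDerivAt_normalizedVariance hf)).norm_right
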